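/- arXiv:1404.7340 — 3 statements merged into one kernel-verified Lean document; each statement's English description precedes it below -/
import Mathlib

section
/- Let F : C₁ → C₂ be a functor, let (L₁, l₁) be a localization on C₁ and (L₂, l₂) a localization on C₂. Then the functors L₂ ∘ F and F ∘ L₁ are naturally isomorphic if and only if F preserves local objects and preserves equivalences. In this case, the unique natural transformation α : F ∘ L₁ → L₂ ∘ F with α ∘ F l₁ = l₂ F and the unique natural transformation β : L₂ ∘ F → F ∘ L₁ with β ∘ l₂ F = F l₁ are mutually inverse natural isomorphisms. -/
/-!
An `L`-equivalence `g : A ⟶ B` is an epimorphism against local targets: `g ≫ h = g ≫ h'` gives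
`L h = L h'`, and `h` is recovered from `L h` when `l Z` is invertible. Both `l₂ (F X)` and, when
`F` preserves equivalences, `F (l₁ X)` are `L₂`-equivalences whose targets `L₂ (F X)` and
`F (L₁ X)` are local, so the defining equations of `α` and `β` force them to be mutually inverse.
If `F` preserves local objects and equivalences, `L₂ (F (l₁ X)) ≫ (l₂ (F (L₁ X)))⁻¹` are the
invertible components of such a `β`. Conversely, an isomorphism `F ⋙ L₂ ≅ L₁ ⋙ F` identifies
`F X ≅ F (L₁ X)` (for `X` local) with the local object `L₂ (F X)`, and conjugates `L₂ (F f)`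
to `F (L₁ f)`.
-/
open CategoryTheory

/-- A localization (reflection) on a category `C`: a functor `L : C ⥤ C` with a natural
transformation `l : 𝟭 C ⟶ L` such that `L (l X) = l (L X)` and these morphisms are
isomorphisms. -/
structure LocalizationData (C : Type*) [Category C] where
  /-- the localization functor -/
  L : C ⥤ C
  /-- the unit -/
  l : 𝟭 C ⟶ L
  coincide : ∀ X : C, L.map (l.app X) = l.app (L.obj X)
  isIso : ∀ X : C, IsIso (L.map (l.app X))

/-- An object `X` is `L`-local if `l X : X ⟶ L X` is an isomorphism. -/
def LocalizationData.IsLocal {C : Type*} [Category C] (Λ : LocalizationData C) (X : C) : Prop :=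
  IsIso (Λ.l.app X)

/-- A morphism `g` is an `L`-equivalence if `L g` is an isomorphism. -/
def LocalizationData.IsEquiv {C : Type*} [Category C] (Λ : LocalizationData C)
    {X Y : C} (g : X ⟶ Y) : Prop :=
  IsIso (Λ.L.map g)

namespace LocalizationData

variable {C : Type*} [Category C] (Λ : LocalizationData C)

lemma isLocal_obj (X : C) : Λ.IsLocal (Λ.L.obj X) := by
  unfold IsLocal
  rw [← Λ.coincide]
  exact Λ.isIso X

lemma isEquiv_l_app (X : C) : Λ.IsEquiv (Λ.l.app X) := Λ.isIso X

lemma isLocal_of_iso {X Y : C} (e : X ≅ Y) (hY : Λ.IsLocal Y) : Λ.IsLocal X :=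
  (NatTrans.isIso_app_iff_of_iso Λ.l e).2 hY

lemma hom_ext_of_isEquiv {A B Z : C} {g : A ⟶ B} (hg : Λ.IsEquiv g) (hZ : Λ.IsLocal Z)
    {h h' : B ⟶ Z} (H : g ≫ h = g ≫ h') : h = h' := by
  have : IsIso (Λ.L.map g) := hg
  have : IsIso (Λ.l.app Z) := hZ
  have hL : Λ.L.map h = Λ.L.map h' := by
    simpa only [Functor.map_comp, cancel_epi] using congrArg Λ.L.map H
  rw [← cancel_mono (Λ.l.app Z)]
  calc h ≫ Λ.l.app Z = Λ.l.app B ≫ Λ.L.map h := Λ.l.naturality h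
    _ = h' ≫ Λ.l.app Z := by rw [hL]; exact (Λ.l.naturality h').symm

end LocalizationData

namespace CategoryTheory.Functor

open LocalizationData

variable {C₁ C₂ : Type*} [Category C₁] [Category C₂] (F : C₁ ⥤ C₂)
  {Λ₁ : LocalizationData C₁} {Λ₂ : LocalizationData C₂}

lemma isLocal_obj_of_iso (e : F ⋙ Λ₂.L ≅ Λ₁.L ⋙ F) {X : C₁} (hX : Λ₁.IsLocal X) :
    Λ₂.IsLocal (F.obj X) :=
  have : IsIso (Λ₁.l.app X) := hX
  Λ₂.isLocal_of_iso (F.mapIso (asIso (Λ₁.l.app X)) ≪≫ (e.app X).symm) (Λ₂.isLocal_obj _)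

lemma isEquiv_map_of_iso (e : F ⋙ Λ₂.L ≅ Λ₁.L ⋙ F) {X Y : C₁} {f : X ⟶ Y}
    (hf : Λ₁.IsEquiv f) : Λ₂.IsEquiv (F.map f) :=
  have : IsIso (Λ₁.L.map f) := hf
  (NatIso.isIso_map_iff e f).2 (inferInstanceAs (IsIso (F.map (Λ₁.L.map f))))

variable (Λ₁ Λ₂)
variable (hloc : ∀ X : C₁, Λ₁.IsLocal X → Λ₂.IsLocal (F.obj X))
  (heq : ∀ ⦃X Y : C₁⦄ (f : X ⟶ Y), Λ₁.IsEquiv f → Λ₂.IsEquiv (F.map f))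

noncomputable def localizationComparisonApp (X : C₁) :
    Λ₂.L.obj (F.obj X) ≅ F.obj (Λ₁.L.obj X) :=
  -- `show` gives the abstracted instance proofs the type `IsIso _` rather than `IsEquiv _`,
  -- which the rewrites below need
  have : IsIso (Λ₂.L.map (F.map (Λ₁.l.app X))) := show IsIso _ from heq _ (Λ₁.isEquiv_l_app X)
  have : IsIso (Λ₂.l.app (F.obj (Λ₁.L.obj X))) := show IsIso _ from hloc _ (Λ₁.isLocal_obj X)
  asIso (Λ₂.L.map (F.map (Λ₁.l.app X))) ≪≫ (asIso (Λ₂.l.app (F.obj (Λ₁.L.obj X)))).symm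

lemma l_app_comp_localizationComparisonApp_hom (X : C₁) :
    Λ₂.l.app (F.obj X) ≫ (F.localizationComparisonApp Λ₁ Λ₂ hloc heq X).hom =
      F.map (Λ₁.l.app X) := by
  simp only [localizationComparisonApp, Iso.trans_hom, Iso.symm_hom, asIso_hom, asIso_inv]
  rw [← Λ₂.l.naturality_assoc, Functor.id_map, IsIso.hom_inv_id, Category.comp_id]

noncomputable def localizationComparison : F ⋙ Λ₂.L ≅ Λ₁.L ⋙ F :=
  NatIso.ofComponents (F.localizationComparisonApp Λ₁ Λ₂ hloc heq) fun {X Y} f =>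
    Λ₂.hom_ext_of_isEquiv (Λ₂.isEquiv_l_app (F.obj X)) (hloc _ (Λ₁.isLocal_obj Y)) <| by
      rw [Functor.comp_map, ← Λ₂.l.naturality_assoc, Functor.id_map,
        l_app_comp_localizationComparisonApp_hom,
        reassoc_of% (l_app_comp_localizationComparisonApp_hom F Λ₁ Λ₂ hloc heq X),
        Functor.comp_map, ← F.map_comp, ← F.map_comp, ← Λ₁.l.naturality f, Functor.id_map]

end CategoryTheory.Functor

/-- `L₂ ∘ F` and `F ∘ L₁` are naturally isomorphic iff `F` preserves local
objects and equivalences; in that case the canonical `α` and `β` are mutually inverse. -/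
theorem comparison_iso_iff_preserves_local_and_equiv
    {C₁ C₂ : Type*} [Category C₁] [Category C₂] (F : C₁ ⥤ C₂)
    (Λ₁ : LocalizationData C₁) (Λ₂ : LocalizationData C₂) :
    (Nonempty (F ⋙ Λ₂.L ≅ Λ₁.L ⋙ F) ↔
      ((∀ X : C₁, Λ₁.IsLocal X → Λ₂.IsLocal (F.obj X)) ∧
        (∀ ⦃X Y : C₁⦄ (f : X ⟶ Y), Λ₁.IsEquiv f → Λ₂.IsEquiv (F.map f)))) ∧
    ((∀ X : C₁, Λ₁.IsLocal X → Λ₂.IsLocal (F.obj X)) →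
      (∀ ⦃X Y : C₁⦄ (f : X ⟶ Y), Λ₁.IsEquiv f → Λ₂.IsEquiv (F.map f)) →
      ∀ (α : Λ₁.L ⋙ F ⟶ F ⋙ Λ₂.L) (β : F ⋙ Λ₂.L ⟶ Λ₁.L ⋙ F),
        (∀ X : C₁, F.map (Λ₁.l.app X) ≫ α.app X = Λ₂.l.app (F.obj X)) →
        (∀ X : C₁, Λ₂.l.app (F.obj X) ≫ β.app X = F.map (Λ₁.l.app X)) →
        α ≫ β = 𝟙 (Λ₁.L ⋙ F) ∧ β ≫ α = 𝟙 (F ⋙ Λ₂.L)) := by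
  refine ⟨⟨fun ⟨e⟩ => ⟨fun X => F.isLocal_obj_of_iso e, fun X Y f => F.isEquiv_map_of_iso e⟩,
    fun ⟨hloc, heq⟩ => ⟨F.localizationComparison Λ₁ Λ₂ hloc heq⟩⟩, ?_⟩
  intro hloc heq α β hα hβ
  constructor <;> ext X
  · refine Λ₂.hom_ext_of_isEquiv (heq _ (Λ₁.isEquiv_l_app X)) (hloc _ (Λ₁.isLocal_obj X)) ?_
    simp [reassoc_of% (hα X), hβ X]
  · refine Λ₂.hom_ext_of_isEquiv (Λ₂.isEquiv_l_app (F.obj X)) (Λ₂.isLocal_obj _) ?_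
    simp [reassoc_of% (hβ X), hα X]
end

section
/- Let (T, η, μ) be a monad on a category C with Eilenberg–Moore adjunction F : C ⇄ C^T : U, and let f be a morphism in C such that an f-localization functor L_f exists on C. Then there exists an Ff-localization functor L_{Ff} on C^T together with a natural isomorphism L_f ∘ U ≅ U ∘ L_{Ff} if and only if T preserves f-equivalences (i.e. Tg is an f-equivalence whenever g is an f-equivalence). -/
open CategoryTheory

/-- An object `X` is `f`-local if precomposition with `f` gives a bijection
`C(B, X) → C(A, X)`. -/
def IsLocalWrt {C : Type*} [Category C] {A B : C} (f : A ⟶ B) (X : C) : Prop :=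
  Function.Bijective (fun g : B ⟶ X => f ≫ g)

/-- A morphism `g` is an `f`-equivalence if every `f`-local object is orthogonal to `g`. -/
def IsEquivWrt {C : Type*} [Category C] {A B : C} (f : A ⟶ B) {U V : C} (g : U ⟶ V) : Prop :=
  ∀ X : C, IsLocalWrt f X → Function.Bijective (fun h : V ⟶ X => g ≫ h)

/-- An `f`-localization functor: a localization whose local objects (those `X` with `l_X` an
isomorphism) are exactly the `f`-local objects, and whose unit components are
`f`-equivalences. -/
structure FLocalization {C : Type*} [Category C] {A B : C} (f : A ⟶ B)
    extends LocalizationData C where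
  local_iff : ∀ X : C, IsIso (l.app X) ↔ IsLocalWrt f X
  unit_isEquiv : ∀ X : C, IsEquivWrt f (l.app X)

/-!
If `T` preserves `f`-equivalences, then for an algebra `(X, a)` the map `T l_X` is an
`f`-equivalence into the `f`-local object `L_f X`, so `a ≫ l_X` factors uniquely through it as
`T l_X ≫ a'`, and `a'` is an algebra structure on `L_f X`. This lifts `L_f` to algebras,
commuting with `U` on the nose. By adjunction an algebra is `F f`-local exactly when its carrier
is `f`-local, which makes the lifted unit an `F f`-equivalence.

Conversely, `F` sends `f`-equivalences to `F f`-equivalences, which `L_{F f}` inverts; through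
`L_f U ≅ U L_{F f}`, `L_f` inverts `U F g = T g`, and a map is an `f`-equivalence exactly when
`L_f` inverts it.
-/

section

variable {C : Type*} [Category C] {A B : C} {f : A ⟶ B}

lemma isEquivWrt_iff_isLocal_isLocalWrt {U V : C} (g : U ⟶ V) :
    IsEquivWrt f g ↔ ObjectProperty.isLocal (IsLocalWrt f) g :=
  Iff.rfl

namespace IsEquivWrt

variable {U V X : C} {g : U ⟶ V}

noncomputable def extend (hg : IsEquivWrt f g) (hX : IsLocalWrt f X) (h : U ⟶ X) : V ⟶ X :=
  ((hg X hX).2 h).choose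

lemma fac_extend (hg : IsEquivWrt f g) (hX : IsLocalWrt f X) (h : U ⟶ X) :
    g ≫ hg.extend hX h = h :=
  ((hg X hX).2 h).choose_spec

lemma hom_ext (hg : IsEquivWrt f g) (hX : IsLocalWrt f X) {p q : V ⟶ X}
    (w : g ≫ p = g ≫ q) : p = q :=
  (hg X hX).1 w

end IsEquivWrt

namespace FLocalization

variable (Lf : FLocalization f)

lemma isLocalWrt_obj (X : C) : IsLocalWrt f (Lf.L.obj X) := by
  have : IsIso (Lf.l.app (Lf.L.obj X)) := Lf.coincide X ▸ Lf.isIso X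
  exact (Lf.local_iff _).mp this

lemma isEquivWrt_iff_isIso_map {U V : C} (g : U ⟶ V) :
    IsEquivWrt f g ↔ IsIso (Lf.L.map g) := by
  simp only [isEquivWrt_iff_isLocal_isLocalWrt]
  have hl : ∀ X, ObjectProperty.isLocal (IsLocalWrt f) (Lf.l.app X) := Lf.unit_isEquiv
  have hsq : g ≫ Lf.l.app V = Lf.l.app U ≫ Lf.L.map g := Lf.l.naturality g
  rw [← ObjectProperty.isLocal_iff_isIso _ _ (Lf.isLocalWrt_obj U) (Lf.isLocalWrt_obj V)]
  constructor
  · intro hg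
    refine MorphismProperty.of_precomp _ _ _ (hl U) ?_
    exact hsq ▸ MorphismProperty.comp_mem _ _ _ hg (hl V)
  · intro hLg
    refine MorphismProperty.of_postcomp _ _ _ (hl V) ?_
    exact hsq ▸ MorphismProperty.comp_mem _ _ _ (hl U) hLg

end FLocalization

lemma CategoryTheory.Adjunction.bijective_precomp_map_iff {D : Type*} [Category D]
    {F : C ⥤ D} {G : D ⥤ C} (adj : F ⊣ G) {U V : C} (g : U ⟶ V) (Z : D) :
    Function.Bijective (fun h : F.obj V ⟶ Z => F.map g ≫ h) ↔
      Function.Bijective (fun k : V ⟶ G.obj Z => g ≫ k) := by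
  have hcomm : (adj.homEquiv U Z) ∘ (fun h => F.map g ≫ h) =
      (fun k => g ≫ k) ∘ (adj.homEquiv V Z) :=
    funext fun h => adj.homEquiv_naturality_left g h
  rw [← EquivLike.comp_bijective _ (adj.homEquiv U Z), hcomm,
    EquivLike.bijective_comp]

variable (T : Monad C)

lemma isLocalWrt_free_map_iff (Z : T.Algebra) :
    IsLocalWrt (T.free.map f) Z ↔ IsLocalWrt f Z.A :=
  T.adj.bijective_precomp_map_iff f Z

lemma IsEquivWrt.free_map {U V : C} {g : U ⟶ V} (hg : IsEquivWrt f g) :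
    IsEquivWrt (T.free.map f) (T.free.map g) := fun Z hZ =>
  (T.adj.bijective_precomp_map_iff g Z).mpr (hg Z.A ((isLocalWrt_free_map_iff T Z).mp hZ))

def CategoryTheory.Monad.PreservesEquivWrt (f : A ⟶ B) : Prop :=
  ∀ ⦃U V : C⦄ (g : U ⟶ V), IsEquivWrt f g → IsEquivWrt f (T.map g)

namespace CategoryTheory.Monad.PreservesEquivWrt

variable {T} (hT : T.PreservesEquivWrt f)

noncomputable def transferAlgebra (X : T.Algebra) {P : C} (hP : IsLocalWrt f P) {u : X.A ⟶ P}
    (hu : IsEquivWrt f u) : T.Algebra where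
  A := P
  a := (hT u hu).extend hP (X.a ≫ u)
  unit := hu.hom_ext hP <| by
    set a := (hT u hu).extend hP (X.a ≫ u)
    have fac : T.map u ≫ a = X.a ≫ u := (hT u hu).fac_extend hP _
    refine (T.η.naturality_assoc u a).trans ?_
    rw [fac, X.unit_assoc, Category.comp_id]
  assoc := (hT _ (hT u hu)).hom_ext hP <| by
    set a := (hT u hu).extend hP (X.a ≫ u)
    have fac : T.map u ≫ a = X.a ≫ u := (hT u hu).fac_extend hP _
    calc T.map (T.map u) ≫ T.μ.app P ≫ a = T.μ.app X.A ≫ T.map u ≫ a :=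
          T.μ.naturality_assoc u a
      _ = T.map X.a ≫ X.a ≫ u := by rw [fac, X.assoc_assoc]
      _ = T.map (T.map u) ≫ T.map a ≫ a := by
          rw [← Functor.map_comp_assoc, fac, Functor.map_comp_assoc, fac]

noncomputable def toTransferAlgebra (X : T.Algebra) {P : C} (hP : IsLocalWrt f P)
    {u : X.A ⟶ P} (hu : IsEquivWrt f u) : X ⟶ hT.transferAlgebra X hP hu where
  f := u
  h := (hT u hu).fac_extend hP (X.a ≫ u)

def algebraHomOfComp {X Y Z : T.Algebra} (u : X ⟶ Y) (hu : IsEquivWrt f u.f)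
    (hZ : IsLocalWrt f Z.A) (w : X ⟶ Z) (k : Y.A ⟶ Z.A) (hk : u.f ≫ k = w.f) : Y ⟶ Z where
  f := k
  h := (hT _ hu).hom_ext hZ <| by
    rw [← Functor.map_comp_assoc, hk, w.h, u.h_assoc, hk]

include hT in
lemma isEquivWrt_free_map_of_isEquivWrt_f {X Y : T.Algebra} (u : X ⟶ Y)
    (hu : IsEquivWrt f u.f) : IsEquivWrt (T.free.map f) u := by
  intro Z hZ
  rw [isLocalWrt_free_map_iff] at hZ
  constructor
  · intro p q hpq
    exact Monad.Algebra.Hom.ext (hu.hom_ext hZ (congrArg Monad.Algebra.Hom.f hpq))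
  · intro w
    exact ⟨hT.algebraHomOfComp u hu hZ w _ (hu.fac_extend hZ w.f),
      Monad.Algebra.Hom.ext (hu.fac_extend hZ w.f)⟩

end CategoryTheory.Monad.PreservesEquivWrt

namespace FLocalization

variable {T} (Lf : FLocalization f) (hT : T.PreservesEquivWrt f)

noncomputable def liftAlgebra (X : T.Algebra) : T.Algebra :=
  hT.transferAlgebra X (Lf.isLocalWrt_obj X.A) (Lf.unit_isEquiv X.A)

noncomputable def liftUnitApp (X : T.Algebra) : X ⟶ Lf.liftAlgebra hT X :=
  hT.toTransferAlgebra X (Lf.isLocalWrt_obj X.A) (Lf.unit_isEquiv X.A)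

noncomputable def liftFunctor : T.Algebra ⥤ T.Algebra where
  obj := Lf.liftAlgebra hT
  map {X Y} h := hT.algebraHomOfComp (Lf.liftUnitApp hT X) (Lf.unit_isEquiv X.A)
    (Lf.isLocalWrt_obj Y.A) (h ≫ Lf.liftUnitApp hT Y) (Lf.L.map h.f)
    (Lf.l.naturality h.f).symm
  map_id X := Monad.Algebra.Hom.ext (Lf.L.map_id X.A)
  map_comp h k := Monad.Algebra.Hom.ext (Lf.L.map_comp h.f k.f)

noncomputable def liftUnit : 𝟭 T.Algebra ⟶ Lf.liftFunctor hT where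
  app := Lf.liftUnitApp hT
  naturality _ _ h := Monad.Algebra.Hom.ext (Lf.l.naturality h.f)

noncomputable def lift : FLocalization (T.free.map f) where
  L := Lf.liftFunctor hT
  l := Lf.liftUnit hT
  coincide X := Monad.Algebra.Hom.ext (Lf.coincide X.A)
  isIso X :=
    have : IsIso ((Lf.liftFunctor hT).map ((Lf.liftUnit hT).app X)).f := Lf.isIso X.A
    T.algebra_iso_of_iso _
  local_iff X := by
    rw [isLocalWrt_free_map_iff, ← Lf.local_iff]
    exact (isIso_iff_of_reflects_iso _ T.forget).symm
  unit_isEquiv X := hT.isEquivWrt_free_map_of_isEquivWrt_f _ (Lf.unit_isEquiv X.A)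

lemma forget_comp_L_eq_lift_L_comp_forget : T.forget ⋙ Lf.L = (Lf.lift hT).L ⋙ T.forget :=
  rfl

end FLocalization

end

/-- For a monad `T` on `C` with Eilenberg–Moore adjunction
`F : C ⇄ C^T : U` and a morphism `f` admitting an `f`-localization `L_f` on `C`, an
`F f`-localization on `C^T` with `L_f ∘ U ≅ U ∘ L_{F f}` exists if and only if `T` preserves
`f`-equivalences. -/
theorem f_localization_lifts_to_algebras_iff_monad_preserves_f_equivalences
    {C : Type*} [Category C] (T : Monad C)
    {A B : C} (f : A ⟶ B) (Lf : FLocalization f) :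
    (∃ LFf : FLocalization (T.free.map f),
      Nonempty (T.forget ⋙ Lf.L ≅ LFf.L ⋙ T.forget)) ↔
    (∀ ⦃U V : C⦄ (g : U ⟶ V), IsEquivWrt f g → IsEquivWrt f (T.map g)) := by
  constructor
  · rintro ⟨LFf, ⟨e⟩⟩ U V g hg
    have : IsIso (LFf.L.map (T.free.map g)) :=
      (LFf.isEquivWrt_iff_isIso_map _).mp (hg.free_map T)
    rw [Lf.isEquivWrt_iff_isIso_map]
    exact (NatIso.isIso_map_iff e (T.free.map g)).mpr (T.forget.map_isIso _)
  · intro hT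
    exact ⟨Lf.lift hT, ⟨eqToIso (Lf.forget_comp_L_eq_lift_L_comp_forget hT)⟩⟩
end

section
/- Let (T, η, μ) be a monad on a category C and let (C', c) be a colocalization on C. Then the following are equivalent: (a) T preserves C'-colocal objects; (b) for every T-algebra (X, a) there is a unique T-algebra structure on C'X such that c_X : C'X → X is a morphism of T-algebras; (c) there is a colocalization C'' on the Eilenberg–Moore category C^T such that C' ∘ U ≅ U ∘ C'' naturally, where U is the forgetful functor; (d) there is a colocalization C'' on C^T such that U preserves and reflects colocal objects and preserves and reflects equivalences. -/
open CategoryTheory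

/-!
If `T` preserves colocal objects, then `T (C' X)` is colocal, so composing with `c_X` is a
bijection from maps `T (C' X) ⟶ C' X` to maps `T (C' X) ⟶ X`. The algebra structure on `C' X`
is the preimage of `T c_X ≫ a`, and the algebra laws and naturality are checked after composing
with `c`. This lifts `(C', c)` to `C^T` strictly over the forgetful functor, which gives (b), (c)
and (d), since the forgetful functor reflects isomorphisms.

Conversely, each of (b), (c), (d) provides, for colocal `X`, a colocal `T`-algebra `B` and an
algebra map `p : B ⟶ T X` to the free algebra with `C' p` invertible. Since `X` is colocal, the
unit `X ⟶ T X` lifts through `p`; its extension to an algebra map `T X ⟶ B` is a section of `p`,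
so `T X` is a retract of a colocal object, hence colocal.
-/

/-- A colocalization (coreflection) on a category `C`: a functor `K : C ⥤ C` with a natural
transformation `c : K ⟶ 𝟭 C` such that `K (c X) = c (K X)` and these morphisms are
isomorphisms. -/
structure ColocalizationData (C : Type*) [Category C] where
  /-- the colocalization functor -/
  K : C ⥤ C
  /-- the counit -/
  c : K ⟶ 𝟭 C
  coincide : ∀ X : C, K.map (c.app X) = c.app (K.obj X)
  isIso : ∀ X : C, IsIso (K.map (c.app X))

/-- An object `X` is colocal if `c X : K X ⟶ X` is an isomorphism. -/
def ColocalizationData.IsColocal {C : Type*} [Category C] (Γ : ColocalizationData C)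
    (X : C) : Prop :=
  IsIso (Γ.c.app X)

/-- A morphism `g` is an equivalence if `K g` is an isomorphism. -/
def ColocalizationData.IsEquiv {C : Type*} [Category C] (Γ : ColocalizationData C)
    {X Y : C} (g : X ⟶ Y) : Prop :=
  IsIso (Γ.K.map g)

namespace ColocalizationData

variable {C : Type*} [Category C] (Γ : ColocalizationData C)

theorem c_naturality {X Y : C} (f : X ⟶ Y) : Γ.K.map f ≫ Γ.c.app Y = Γ.c.app X ≫ f :=
  Γ.c.naturality f

theorem isColocal_K_obj (X : C) : Γ.IsColocal (Γ.K.obj X) := by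
  have h := Γ.isIso X
  rwa [Γ.coincide X] at h

theorem hom_ext_of_isColocal {W Y : C} (hW : Γ.IsColocal W) {g h : W ⟶ Γ.K.obj Y}
    (e : g ≫ Γ.c.app Y = h ≫ Γ.c.app Y) : g = h := by
  have : IsIso (Γ.c.app W) := hW
  have := Γ.isIso Y
  have hK : Γ.K.map g = Γ.K.map h := by
    rw [← cancel_mono (Γ.K.map (Γ.c.app Y)), ← Functor.map_comp, ← Functor.map_comp, e]
  rw [← cancel_epi (Γ.c.app W), ← Γ.c_naturality, ← Γ.c_naturality, hK]

theorem isColocal_of_section {Z : C} (s : Z ⟶ Γ.K.obj Z) (hs : s ≫ Γ.c.app Z = 𝟙 Z) :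
    Γ.IsColocal Z :=
  ⟨s, Γ.hom_ext_of_isColocal (Γ.isColocal_K_obj Z) (by simp [hs]), hs⟩

theorem isColocal_of_retract {X Y : C} (h : Retract X Y) (hY : Γ.IsColocal Y) :
    Γ.IsColocal X := by
  have : IsIso (Γ.c.app Y) := hY
  refine Γ.isColocal_of_section (h.i ≫ inv (Γ.c.app Y) ≫ Γ.K.map h.r) ?_
  simp

theorem exists_comp_eq_of_isColocal {Z V W : C} (hZ : Γ.IsColocal Z) {g : V ⟶ W}
    (hg : Γ.IsEquiv g) (f : Z ⟶ W) : ∃ l : Z ⟶ V, l ≫ g = f := by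
  have : IsIso (Γ.c.app Z) := hZ
  have : IsIso (Γ.K.map g) := hg
  refine ⟨inv (Γ.c.app Z) ≫ Γ.K.map f ≫ inv (Γ.K.map g) ≫ Γ.c.app V, ?_⟩
  simp only [Category.assoc, ← Γ.c_naturality g, IsIso.inv_hom_id_assoc, Γ.c_naturality f]

variable {T : Monad C}

def PreservesColocal (T : Monad C) : Prop :=
  ∀ X : C, Γ.IsColocal X → Γ.IsColocal (T.obj X)

theorem isColocal_monad_obj_of_isEquiv {X : C} (hX : Γ.IsColocal X) (B : Monad.Algebra T)
    (hB : Γ.IsColocal B.A) (p : B.A ⟶ T.obj X) (hp : T.map p ≫ T.μ.app X = B.a ≫ p)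
    (hpK : Γ.IsEquiv p) : Γ.IsColocal (T.obj X) := by
  obtain ⟨h, hh⟩ := Γ.exists_comp_eq_of_isColocal hX hpK (T.η.app X)
  refine Γ.isColocal_of_retract ⟨T.map h ≫ B.a, p, ?_⟩ hB
  rw [Category.assoc, ← hp, ← Functor.map_comp_assoc, hh]
  exact T.right_unit X

theorem preservesColocal_of_colocalization (Γ' : ColocalizationData (Monad.Algebra T))
    (hK : ∀ A, Γ.IsColocal (Γ'.K.obj A).A) (hc : ∀ A, Γ.IsEquiv (Γ'.c.app A).f) :
    Γ.PreservesColocal T := fun X hX =>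
  Γ.isColocal_monad_obj_of_isEquiv hX _ (hK _) _ (Γ'.c.app (T.free.obj X)).h (hc _)

theorem preservesColocal_of_forget_comp_iso (Γ' : ColocalizationData (Monad.Algebra T))
    (φ : T.forget ⋙ Γ.K ≅ Γ'.K ⋙ T.forget) : Γ.PreservesColocal T := by
  refine Γ.preservesColocal_of_colocalization Γ'
    (fun A => Γ.isColocal_of_retract (φ.app A).symm.retract (Γ.isColocal_K_obj A.A))
    (fun A => ?_)
  have := Γ'.isIso A
  have : IsIso ((Γ'.K ⋙ T.forget).map (Γ'.c.app A)) :=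
    Functor.map_isIso T.forget (Γ'.K.map (Γ'.c.app A))
  change IsIso ((T.forget ⋙ Γ.K).map (Γ'.c.app A))
  rw [← NatIso.naturality_2 φ (Γ'.c.app A)]
  infer_instance

theorem preservesColocal_of_forall_exists_lift
    (h : ∀ A : Monad.Algebra T,
      ∃ a' : T.obj (Γ.K.obj A.A) ⟶ Γ.K.obj A.A,
        (T.η.app (Γ.K.obj A.A) ≫ a' = 𝟙 (Γ.K.obj A.A) ∧
          T.μ.app (Γ.K.obj A.A) ≫ a' = T.map a' ≫ a') ∧
        a' ≫ Γ.c.app A.A = T.map (Γ.c.app A.A) ≫ A.a) :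
    Γ.PreservesColocal T := fun X hX => by
  obtain ⟨a', ⟨hunit, hassoc⟩, hc⟩ := h (T.free.obj X)
  exact Γ.isColocal_monad_obj_of_isEquiv hX ⟨Γ.K.obj (T.obj X), a', hunit, hassoc⟩
    (Γ.isColocal_K_obj _) (Γ.c.app (T.obj X)) hc.symm (Γ.isIso _)

namespace PreservesColocal

variable {Γ} (hT : Γ.PreservesColocal T)
include hT

noncomputable def liftStr (A : Monad.Algebra T) : T.obj (Γ.K.obj A.A) ⟶ Γ.K.obj A.A :=
  @inv _ _ _ _ (Γ.c.app _) (show IsIso (Γ.c.app (T.obj (Γ.K.obj A.A))) from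
    hT _ (Γ.isColocal_K_obj A.A)) ≫ Γ.K.map (T.map (Γ.c.app A.A) ≫ A.a)

theorem liftStr_c (A : Monad.Algebra T) :
    liftStr hT A ≫ Γ.c.app A.A = T.map (Γ.c.app A.A) ≫ A.a := by
  have : IsIso (Γ.c.app (T.obj (Γ.K.obj A.A))) := hT _ (Γ.isColocal_K_obj A.A)
  rw [liftStr, Category.assoc, Γ.c_naturality, IsIso.inv_hom_id_assoc]

theorem eq_liftStr {A : Monad.Algebra T} {a' : T.obj (Γ.K.obj A.A) ⟶ Γ.K.obj A.A}
    (h : a' ≫ Γ.c.app A.A = T.map (Γ.c.app A.A) ≫ A.a) : a' = liftStr hT A :=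
  Γ.hom_ext_of_isColocal (hT _ (Γ.isColocal_K_obj A.A)) (by rw [h, liftStr_c])

theorem liftStr_unit (A : Monad.Algebra T) :
    T.η.app (Γ.K.obj A.A) ≫ liftStr hT A = 𝟙 (Γ.K.obj A.A) := by
  refine Γ.hom_ext_of_isColocal (Γ.isColocal_K_obj A.A) ?_
  rw [Category.assoc, liftStr_c, ← T.η.naturality_assoc]
  simp [A.unit]

theorem liftStr_assoc (A : Monad.Algebra T) :
    T.μ.app (Γ.K.obj A.A) ≫ liftStr hT A = T.map (liftStr hT A) ≫ liftStr hT A := by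
  refine Γ.hom_ext_of_isColocal (hT _ (hT _ (Γ.isColocal_K_obj A.A))) ?_
  rw [Category.assoc, Category.assoc, liftStr_c, ← T.μ.naturality_assoc]
  simp only [Functor.comp_map, Functor.id_obj, A.assoc, ← Functor.map_comp_assoc, liftStr_c]

theorem liftStr_naturality {A B : Monad.Algebra T} (f : A ⟶ B) :
    T.map (Γ.K.map f.f) ≫ liftStr hT B = liftStr hT A ≫ Γ.K.map f.f := by
  refine Γ.hom_ext_of_isColocal (hT _ (Γ.isColocal_K_obj A.A)) ?_
  rw [Category.assoc, Category.assoc, liftStr_c, Γ.c_naturality,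
    ← Category.assoc (liftStr hT A), liftStr_c, ← Functor.map_comp_assoc, Γ.c_naturality,
    Functor.map_comp_assoc, f.h, Category.assoc]

noncomputable def lift : ColocalizationData (Monad.Algebra T) where
  K :=
    { obj A := ⟨Γ.K.obj A.A, liftStr hT A, liftStr_unit hT A, liftStr_assoc hT A⟩
      map f := ⟨Γ.K.map f.f, liftStr_naturality hT f⟩
      map_id A := by ext; exact Γ.K.map_id A.A
      map_comp f g := by ext; exact Γ.K.map_comp f.f g.f }
  c :=
    { app A := ⟨Γ.c.app A.A, (liftStr_c hT A).symm⟩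
      naturality _ _ f := by ext; exact Γ.c_naturality f.f }
  coincide A := Monad.Algebra.Hom.ext (Γ.coincide A.A)
  isIso A := (isIso_iff_of_reflects_iso _ T.forget).mp (Γ.isIso A.A)

theorem lift_K_comp_forget : (lift hT).K ⋙ T.forget = T.forget ⋙ Γ.K := rfl

theorem isColocal_lift_iff (A : Monad.Algebra T) :
    (lift hT).IsColocal A ↔ Γ.IsColocal A.A :=
  (isIso_iff_of_reflects_iso _ T.forget).symm

theorem isEquiv_lift_iff ⦃A B : Monad.Algebra T⦄ (g : A ⟶ B) :
    (lift hT).IsEquiv g ↔ Γ.IsEquiv g.f :=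
  (isIso_iff_of_reflects_iso _ T.forget).symm

end PreservesColocal

end ColocalizationData

/-- For a monad `T` and a colocalization `(C', c)` on `C`, the following
are equivalent: (a) `T` preserves colocal objects; (b) every `T`-algebra structure lifts
uniquely to the colocalization; (c) there is a colocalization `C''` on `C^T` with
`C' ∘ U ≅ U ∘ C''`; (d) there is a colocalization `C''` on `C^T` such that `U` preserves and
reflects colocal objects and equivalences. -/
theorem colocalization_monad_tfae
    {C : Type*} [Category C] (T : Monad C) (Γ : ColocalizationData C) :
    ((∀ X : C, Γ.IsColocal X → Γ.IsColocal (T.obj X)) ↔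
      (∀ A : Monad.Algebra T,
        ∃! a' : T.obj (Γ.K.obj A.A) ⟶ Γ.K.obj A.A,
          (T.η.app (Γ.K.obj A.A) ≫ a' = 𝟙 (Γ.K.obj A.A) ∧
            T.μ.app (Γ.K.obj A.A) ≫ a' = T.map a' ≫ a') ∧
          a' ≫ Γ.c.app A.A = T.map (Γ.c.app A.A) ≫ A.a)) ∧
    ((∀ X : C, Γ.IsColocal X → Γ.IsColocal (T.obj X)) ↔
      (∃ Γ' : ColocalizationData (Monad.Algebra T),
        Nonempty (T.forget ⋙ Γ.K ≅ Γ'.K ⋙ T.forget))) ∧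
    ((∀ X : C, Γ.IsColocal X → Γ.IsColocal (T.obj X)) ↔
      (∃ Γ' : ColocalizationData (Monad.Algebra T),
        (∀ A : Monad.Algebra T, Γ'.IsColocal A ↔ Γ.IsColocal (T.forget.obj A)) ∧
        (∀ ⦃A B : Monad.Algebra T⦄ (g : A ⟶ B),
          Γ'.IsEquiv g ↔ Γ.IsEquiv (T.forget.map g)))) := by
  refine ⟨⟨fun (hT : Γ.PreservesColocal T) A =>
      ⟨hT.liftStr A, ⟨⟨hT.liftStr_unit A, hT.liftStr_assoc A⟩, hT.liftStr_c A⟩,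
        fun _ h => hT.eq_liftStr h.2⟩,
      fun h => Γ.preservesColocal_of_forall_exists_lift fun A => (h A).exists⟩,
    ⟨fun (hT : Γ.PreservesColocal T) => ⟨hT.lift, ⟨eqToIso hT.lift_K_comp_forget.symm⟩⟩,
      fun ⟨Γ', ⟨φ⟩⟩ => Γ.preservesColocal_of_forget_comp_iso Γ' φ⟩,
    ⟨fun (hT : Γ.PreservesColocal T) => ⟨hT.lift, hT.isColocal_lift_iff, hT.isEquiv_lift_iff⟩,
      fun ⟨Γ', hcol, heq⟩ => Γ.preservesColocal_of_colocalization Γ'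
        (fun A => (hcol _).mp (Γ'.isColocal_K_obj A)) (fun A => (heq _).mp (Γ'.isIso A))⟩⟩
end
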